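/- arXiv:1112.4015 — 5 statements merged into one kernel-verified Lean document; each statement's English description precedes it below -/
import Mathlib

section
/- Let Γ be a finite connected graph without self-loops, let P_Γ(t) = ∑_{T spanning tree of Γ} ∏_{e∉T} t_e be its Symanzik (spanning tree) polynomial in positive variables (t_e)_{e∈E(Γ)}. Suppose v₁, v₂ are two distinct vertices joined by edges e₁,…,e_k, and let Γ̄ be the graph obtained from Γ by contracting v₁, v₂ and these k edges to a single vertex. Then for all positive t_e, P_Γ(t) ≥ (∑_{i=1}^k t_{e₁} ⋯ t̂_{e_i} ⋯ t_{e_k}) · P_{Γ̄}((t_e)_{e∈E(Γ̄)}), where the hat denotes omission. -/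
open Finset
open scoped Classical

/-- Reachability in the multigraph given by head/tail maps, using edges satisfying `P`. -/
def MGReach {V E : Type*} (hd tl : E → V) (P : E → Prop) (a b : V) : Prop :=
  Relation.ReflTransGen
    (fun x y => ∃ e, P e ∧ ((hd e = x ∧ tl e = y) ∨ (hd e = y ∧ tl e = x))) a b

/-- The multigraph is connected. -/
def MGConnected {V E : Type*} (hd tl : E → V) : Prop :=
  ∀ a b : V, MGReach hd tl (fun _ => True) a b

/-- A finset `T` of edges is a spanning tree. -/
def IsSpanningTree {V E : Type*} [Fintype V] (hd tl : E → V) (T : Finset E) : Prop :=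
  T.card + 1 = Fintype.card V ∧ ∀ a b : V, MGReach hd tl (fun e => e ∈ T) a b

/-- The Symanzik (spanning tree) polynomial `P_Γ(t) = ∑_{T spanning tree} ∏_{e ∉ T} t_e`. -/
noncomputable def symanzik {V E : Type*} [Fintype V] [Fintype E] [DecidableEq E]
    (hd tl : E → V) (t : E → ℝ) : ℝ :=
  ∑ T ∈ Finset.univ.filter (fun T : Finset E => IsSpanningTree hd tl T),
    ∏ e ∈ Finset.univ \ T, t e

/-
Contracting the edges `S` between `v₁` and `v₂` loses exactly one vertex, so for every
`i ∈ S` and every spanning tree `T'` of `Γ̄`, the edge set `T' ∪ {i}` has the right size and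
is connected (`i` reconnects `v₂` to `v₁`): it is a spanning tree of `Γ`. Its complement is
`(S \ {i}) ∪ (E(Γ̄) \ T')`, so its monomial is `(∏_{S \ {i}} t) · ∏_{E(Γ̄) \ T'} t`. The map
`(i, T') ↦ T' ∪ {i}` is injective, hence the right-hand side is a sub-sum of the nonnegative
terms of `P_Γ(t)`.
-/

namespace MGReach

variable {V E : Type*} {hd tl : E → V}

theorem symm {P : E → Prop} {a b : V} (h : MGReach hd tl P a b) : MGReach hd tl P b a :=
  (@Relation.ReflTransGen.stdSymm _ _ ⟨fun _ _ ⟨e, hPe, hab⟩ => ⟨e, hPe, hab.symm⟩⟩).symm _ _ h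

theorem of_edge {P : E → Prop} {a b : V} (e : E) (hPe : P e)
    (hab : (hd e = a ∧ tl e = b) ∨ (hd e = b ∧ tl e = a)) : MGReach hd tl P a b :=
  Relation.ReflTransGen.single ⟨e, hPe, hab⟩

end MGReach

section Contraction

variable {V : Type*} [DecidableEq V] {v₁ v₂ : V}

def contractVertex (hne : v₁ ≠ v₂) (w : V) : {v : V // v ≠ v₂} :=
  if h : w = v₂ then ⟨v₁, hne⟩ else ⟨w, h⟩

theorem card_subtype_ne_add_one [Fintype V] (v : V) :
    Fintype.card {w : V // w ≠ v} + 1 = Fintype.card V := by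
  rw [Fintype.card_subtype_compl, Fintype.card_subtype_eq]
  have := Fintype.card_pos_iff.2 ⟨v⟩
  omega

variable {E E' : Type*} {hd tl : E → V} {P : E → Prop} (hne : v₁ ≠ v₂)

theorem MGReach.to_contractVertex (hv : MGReach hd tl P v₂ v₁) (w : V) :
    MGReach hd tl P w (contractVertex hne w).1 := by
  unfold contractVertex
  split_ifs with h
  · exact h ▸ hv
  · exact .refl

theorem MGReach.of_contract (f : E' → E) {P' : E' → Prop} (hP : ∀ e, P' e → P (f e))
    (hv : MGReach hd tl P v₂ v₁) {x y : {v : V // v ≠ v₂}}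
    (h : MGReach (fun e => contractVertex hne (hd (f e)))
      (fun e => contractVertex hne (tl (f e))) P' x y) :
    MGReach hd tl P x.1 y.1 := by
  induction h with
  | refl => exact .refl
  | tail _ hstep ih =>
    obtain ⟨e, hP'e, hends⟩ := hstep
    have hedge : MGReach hd tl P (hd (f e)) (tl (f e)) :=
      .of_edge (f e) (hP e hP'e) (.inl ⟨rfl, rfl⟩)
    have hhd := MGReach.to_contractVertex hne hv (hd (f e))
    have htl := MGReach.to_contractVertex hne hv (tl (f e))
    refine ih.trans ?_
    rcases hends with ⟨rfl, rfl⟩ | ⟨rfl, rfl⟩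
    · exact hhd.symm.trans (hedge.trans htl)
    · exact htl.symm.trans (hedge.symm.trans hhd)

variable [Fintype V]

theorem isSpanningTree_insert_map [DecidableEq E] (f : E' ↪ E) {i : E} {T' : Finset E'}
    (hi : i ∉ T'.map f)
    (hends : (hd i = v₁ ∧ tl i = v₂) ∨ (hd i = v₂ ∧ tl i = v₁))
    (hT' : IsSpanningTree (fun e => contractVertex hne (hd (f e)))
      (fun e => contractVertex hne (tl (f e))) T') :
    IsSpanningTree hd tl (insert i (T'.map f)) := by
  refine ⟨?_, fun a b => ?_⟩
  · rw [Finset.card_insert_of_notMem hi, Finset.card_map, ← card_subtype_ne_add_one v₂, ← hT'.1]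
  · have hv : MGReach hd tl (· ∈ insert i (T'.map f)) v₂ v₁ :=
      .of_edge i (Finset.mem_insert_self _ _) hends.symm
    have hlift := MGReach.of_contract hne f
      (fun e he => Finset.mem_insert_of_mem (Finset.mem_map_of_mem f he)) hv
      (hT'.2 (contractVertex hne a) (contractVertex hne b))
    exact (MGReach.to_contractVertex hne hv a).trans
      (hlift.trans (MGReach.to_contractVertex hne hv b).symm)

end Contraction

section EdgeSubsets

variable {E : Type*} {S : Finset E}

theorem notMem_map_subtype {i : E} (hi : i ∈ S) (T' : Finset {e : E // e ∉ S}) :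
    i ∉ T'.map (Function.Embedding.subtype _) := by
  simp only [Finset.mem_map, Function.Embedding.coe_subtype, not_exists, not_and]
  rintro e - rfl
  exact e.2 hi

theorem injOn_insert_map_subtype [DecidableEq E] (U : Finset (Finset {e : E // e ∉ S})) :
    Set.InjOn (fun p : E × Finset {e : E // e ∉ S} =>
      insert p.1 (p.2.map (Function.Embedding.subtype _))) ↑(S ×ˢ U) := by
  rintro ⟨i, T'⟩ hp ⟨j, U'⟩ hq (h : insert i _ = insert j _)
  simp only [Finset.coe_product, Set.mem_prod, Finset.mem_coe] at hp hq
  have hij : i = j := by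
    have := h ▸ Finset.mem_insert_self i _
    exact (Finset.mem_insert.1 this).resolve_right (notMem_map_subtype hp.1 U')
  subst hij
  have hmap := congrArg (·.erase i) h
  simp only [Finset.erase_insert (notMem_map_subtype hp.1 _)] at hmap
  rw [Finset.map_injective _ hmap]

theorem prod_compl_insert_map_subtype [Fintype E] [DecidableEq E] (t : E → ℝ) {i : E}
    (hi : i ∈ S) (T' : Finset {e : E // e ∉ S}) :
    ∏ e ∈ Finset.univ \ insert i (T'.map (Function.Embedding.subtype _)), t e
      = (∏ e ∈ S.erase i, t e) * ∏ e ∈ Finset.univ \ T', t e.1 := by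
  have hsplit : Finset.univ \ insert i (T'.map (Function.Embedding.subtype _))
      = S.erase i ∪ (Finset.univ \ T').map (Function.Embedding.subtype _) := by
    ext e
    by_cases he : e ∈ S
    · simp [he]
    · have hei : e ≠ i := fun h => he (h ▸ hi)
      simp [he, hei]
  have hdisj : Disjoint (S.erase i) ((Finset.univ \ T').map (Function.Embedding.subtype _)) :=
    Finset.disjoint_left.2 fun e he hmem => by
      obtain ⟨e', -, rfl⟩ := Finset.mem_map.1 hmem
      exact e'.2 (Finset.mem_of_mem_erase he)
  rw [hsplit, Finset.prod_union hdisj, Finset.prod_map]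
  rfl

end EdgeSubsets

theorem mul_symanzik_contract_le_symanzik [Fintype V] [DecidableEq V] [Fintype E] [DecidableEq E]
    {hd tl : E → V} {v₁ v₂ : V} (hne : v₁ ≠ v₂) {S : Finset E}
    (hS : ∀ e ∈ S, (hd e = v₁ ∧ tl e = v₂) ∨ (hd e = v₂ ∧ tl e = v₁))
    {t : E → ℝ} (ht : ∀ e, 0 ≤ t e) :
    (∑ i ∈ S, ∏ e ∈ S.erase i, t e) *
        symanzik (fun e : {e : E // e ∉ S} => contractVertex hne (hd e.1))
          (fun e => contractVertex hne (tl e.1)) (fun e => t e.1) ≤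
      symanzik hd tl t := by
  set f := Function.Embedding.subtype (· ∉ S)
  set trees' := Finset.univ.filter (IsSpanningTree (fun e : {e : E // e ∉ S} =>
    contractVertex hne (hd e.1)) (fun e => contractVertex hne (tl e.1)))
  calc _ = ∑ p ∈ S ×ˢ trees', ∏ e ∈ Finset.univ \ insert p.1 (p.2.map f), t e := by
        rw [symanzik, Finset.sum_mul_sum, Finset.sum_product]
        exact Finset.sum_congr rfl fun i hi => Finset.sum_congr rfl fun T' _ =>
          (prod_compl_insert_map_subtype t hi T').symm
    _ = ∑ T ∈ (S ×ˢ trees').image (fun p => insert p.1 (p.2.map f)),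
          ∏ e ∈ Finset.univ \ T, t e :=
        (Finset.sum_image (f := fun T => ∏ e ∈ Finset.univ \ T, t e)
          (injOn_insert_map_subtype trees')).symm
    _ ≤ symanzik hd tl t := by
        refine Finset.sum_le_sum_of_subset_of_nonneg ?_
          fun T _ _ => Finset.prod_nonneg fun e _ => ht e
        intro T hT
        obtain ⟨⟨i, T'⟩, hp, rfl⟩ := Finset.mem_image.1 hT
        simp only [trees', Finset.mem_product, Finset.mem_filter, Finset.mem_univ, true_and]
          at hp ⊢
        exact isSpanningTree_insert_map hne f (notMem_map_subtype hp.1 T') (hS i hp.1) hp.2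

theorem stmt_5_general {V E : Type*} [Fintype V] [DecidableEq V] [Fintype E] [DecidableEq E]
    (hd tl : E → V)
    (v₁ v₂ : V) (hne : v₁ ≠ v₂)
    (S : Finset E)
    (hS : ∀ e, e ∈ S ↔ ((hd e = v₁ ∧ tl e = v₂) ∨ (hd e = v₂ ∧ tl e = v₁)))
    (t : E → ℝ) (ht : ∀ e, 0 < t e) :
    symanzik hd tl t ≥
      (∑ i ∈ S, ∏ e ∈ S.erase i, t e) *
        symanzik
          (fun e : {e : E // e ∉ S} =>
            if h : hd e.1 = v₂ then (⟨v₁, hne⟩ : {v : V // v ≠ v₂})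
            else ⟨hd e.1, h⟩)
          (fun e : {e : E // e ∉ S} =>
            if h : tl e.1 = v₂ then (⟨v₁, hne⟩ : {v : V // v ≠ v₂})
            else ⟨tl e.1, h⟩)
          (fun e => t e.1) :=
  mul_symanzik_contract_le_symanzik hne (fun e => (hS e).1) fun e => (ht e).le

/-- Contraction inequality for the Symanzik polynomial.  Let `Γ` be a finite connected
graph without self-loops, `v₁ ≠ v₂` two vertices, and `S` the (nonempty) set of all edges
joining `v₁` and `v₂`.  Let `Γ̄` be the graph obtained by contracting `v₁, v₂` and the
edges of `S` to a single vertex (vertices `{v ≠ v₂}`, edges `{e ∉ S}`).  Then for all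
positive edge weights `t`,
`P_Γ(t) ≥ (∑_{i} ∏_{e ∈ S, e ≠ e_i} t_e) · P_{Γ̄}(t)`. -/
theorem stmt_5 {V E : Type*} [Fintype V] [DecidableEq V] [Fintype E] [DecidableEq E]
    (hd tl : E → V)
    (hconn : MGConnected hd tl)
    (hloop : ∀ e, hd e ≠ tl e)
    (v₁ v₂ : V) (hne : v₁ ≠ v₂)
    (S : Finset E) (hSne : S.Nonempty)
    (hS : ∀ e, e ∈ S ↔ ((hd e = v₁ ∧ tl e = v₂) ∨ (hd e = v₂ ∧ tl e = v₁)))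
    (t : E → ℝ) (ht : ∀ e, 0 < t e) :
    symanzik hd tl t ≥
      (∑ i ∈ S, ∏ e ∈ S.erase i, t e) *
        symanzik
          (fun e : {e : E // e ∉ S} =>
            if h : hd e.1 = v₂ then (⟨v₁, hne⟩ : {v : V // v ≠ v₂})
            else ⟨hd e.1, h⟩)
          (fun e : {e : E // e ∉ S} =>
            if h : tl e.1 = v₂ then (⟨v₁, hne⟩ : {v : V // v ≠ v₂})
            else ⟨tl e.1, h⟩)
          (fun e => t e.1) :=
  stmt_5_general hd tl v₁ v₂ hne S hS t ht
end

section
/- With notation as in the cut formula for M_Γ(t)⁻¹, for every edge e and every index 1 ≤ j ≤ V−1, the quantity |∑_{i=1}^{V−1} ρ_{v(i),e} (M_Γ(t)⁻¹)_{i,j} / t_e| is at most 2, uniformly in all positive (t_e). -/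
open Finset
open scoped Classical

/-- The signed incidence matrix. -/
def inc {V E : Type*} [DecidableEq V] (hd tl : E → V) (v : V) (e : E) : ℝ :=
  if hd e = v then 1 else if tl e = v then -1 else 0

/-!
Ground the base vertex and let `y = M_Γ(t)⁻¹ ρ_e`; the target quantity is `y_j / t_e` because
`M_Γ(t)⁻¹` is symmetric. Extended by `0` at the base vertex, `y` is the potential of a unit
current entering at the head of `e` and leaving at its tail, so by the maximum principle it
takes its largest value at the head and its smallest at the tail. Writing
`Δ_e y = y(hd e) - y(tl e)`, its energy `∑ (Δ_{e'} y)² / t_{e'}` equals `Δ_e y`, hence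
`(Δ_e y)² / t_e ≤ Δ_e y`, i.e. `Δ_e y ≤ t_e`. So every value of `y`, in particular `y_j` and
the value `0` at the base vertex, lies in an interval of length `t_e`, and the quantity is in
fact at most `1`.
-/

open Matrix

section Network

variable {V E : Type*} [DecidableEq V] {hd tl : E → V}

lemma sum_inc_mul [Fintype V] {e : E} (he : hd e ≠ tl e) (f : V → ℝ) :
    ∑ v, inc hd tl v e * f v = f (hd e) - f (tl e) := by
  have hsplit (v : V) : inc hd tl v e * f v =
      (if hd e = v then f v else 0) - (if tl e = v then f v else 0) := by
    unfold inc
    split_ifs <;> simp_all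
  simp only [hsplit, Finset.sum_sub_distrib, Finset.sum_ite_eq, Finset.mem_univ, if_true]

lemma sum_inc [Fintype V] {e : E} (he : hd e ≠ tl e) : ∑ v, inc hd tl v e = 0 := by
  simpa using sum_inc_mul he 1

lemma inc_nonpos {v : V} {e : E} (h : hd e ≠ v) : inc hd tl v e ≤ 0 := by
  unfold inc
  rw [if_neg h]
  split_ifs <;> norm_num

lemma inc_nonneg {v : V} {e : E} (h : tl e ≠ v) : 0 ≤ inc hd tl v e := by
  unfold inc
  split_ifs <;> norm_num

lemma inc_ne_zero {v : V} {e : E} (h : hd e = v ∨ tl e = v) : inc hd tl v e ≠ 0 := by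
  unfold inc
  split_ifs <;> simp_all

lemma inc_mul_div_nonneg_of_forall_le {f : V → ℝ} {x : V} (hmax : ∀ w, f w ≤ f x)
    {t : ℝ} (ht : 0 ≤ t) (e : E) : 0 ≤ inc hd tl x e * ((f (hd e) - f (tl e)) / t) := by
  unfold inc
  split_ifs with hhd htl
  · rw [one_mul, hhd]
    exact div_nonneg (sub_nonneg.2 (hmax _)) ht
  · rw [neg_one_mul, neg_nonneg, htl]
    exact div_nonpos_of_nonpos_of_nonneg (sub_nonpos.2 (hmax _)) ht
  · rw [zero_mul]

omit [DecidableEq V] in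
lemma MGReach.mem_of_closed {P : E → Prop} {S : Set V} {a b : V}
    (h : MGReach hd tl P a b) (ha : a ∈ S)
    (hS : ∀ x ∈ S, x ≠ b → ∀ y e, P e →
      (hd e = x ∧ tl e = y ∨ hd e = y ∧ tl e = x) → y ∈ S) :
    b ∈ S := by
  induction h using Relation.ReflTransGen.head_induction_on with
  | refl => exact ha
  | @head x _ hstep _ ih =>
    obtain ⟨e, hPe, hxy⟩ := hstep
    by_cases hxb : x = b
    · exact hxb ▸ ha
    · exact ih (hS _ ha hxb _ e hPe hxy)

omit [DecidableEq V] in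
lemma MGConnected.eq_of_forall_edge (hconn : MGConnected hd tl) {f : V → ℝ}
    (hf : ∀ e, f (hd e) = f (tl e)) (a b : V) : f a = f b := by
  refine MGReach.mem_of_closed (S := {x | f a = f x}) (hconn a b) rfl ?_
  rintro x hx - y e - (⟨rfl, rfl⟩ | ⟨rfl, rfl⟩)
  exacts [hx.trans (hf e), hx.trans (hf e).symm]

variable [Fintype E] (hd tl) (t : E → ℝ)

/-- `(ρ diag(1/t) ρᵀ f)_v`: the full, unreduced weighted Laplacian of `f` at `v`. -/
noncomputable def weightedLap (f : V → ℝ) (v : V) : ℝ :=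
  ∑ e, inc hd tl v e * ((f (hd e) - f (tl e)) / t e)

lemma weightedLap_neg (f : V → ℝ) (v : V) :
    weightedLap hd tl t (-f) v = -weightedLap hd tl t f v := by
  simp only [weightedLap, Pi.neg_apply, ← Finset.sum_neg_distrib]
  exact Finset.sum_congr rfl fun e _ => by ring

variable [Fintype V] {hd tl t}

lemma sum_mul_weightedLap (hloop : ∀ e, hd e ≠ tl e) (f g : V → ℝ) :
    ∑ v, g v * weightedLap hd tl t f v =
      ∑ e, (g (hd e) - g (tl e)) * ((f (hd e) - f (tl e)) / t e) := by
  simp only [weightedLap, Finset.mul_sum]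
  rw [Finset.sum_comm]
  refine Finset.sum_congr rfl fun e _ => ?_
  rw [← sum_inc_mul (hloop e) g, Finset.sum_mul]
  exact Finset.sum_congr rfl fun v _ => by ring

lemma sum_weightedLap (hloop : ∀ e, hd e ≠ tl e) (f : V → ℝ) :
    ∑ v, weightedLap hd tl t f v = 0 := by
  simpa using sum_mul_weightedLap hloop f 1

theorem le_of_weightedLap_nonpos (hconn : MGConnected hd tl) (ht : ∀ e, 0 < t e)
    {f : V → ℝ} {a : V} (hf : ∀ v ≠ a, weightedLap hd tl t f v ≤ 0) (v : V) : f v ≤ f a := by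
  have : Nonempty V := ⟨a⟩
  obtain ⟨m, hm⟩ := Finite.exists_max f
  -- at a maximum `x ≠ a` every term of `weightedLap f x` is `≥ 0` and they sum to `≤ 0`
  have hflat : ∀ x, f x = f m → x ≠ a → ∀ e, hd e = x ∨ tl e = x → f (hd e) = f (tl e) := by
    intro x hx hxa e he
    have hterm e := inc_mul_div_nonneg_of_forall_le (hd := hd) (tl := tl)
      (fun w => hx ▸ hm w) (ht e).le e
    have hzero := (Finset.sum_eq_zero_iff_of_nonneg fun e _ => hterm e).mp
      (le_antisymm (hf x hxa) (Finset.sum_nonneg fun e _ => hterm e)) e (Finset.mem_univ e)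
    rw [mul_eq_zero, div_eq_zero_iff, sub_eq_zero] at hzero
    exact (hzero.resolve_left (inc_ne_zero he)).resolve_right (ht e).ne'
  have hma : f a = f m := by
    refine MGReach.mem_of_closed (S := {x | f x = f m}) (hconn m a) rfl ?_
    rintro x hx hxa y e - (⟨rfl, rfl⟩ | ⟨rfl, rfl⟩)
    · exact (hflat _ hx hxa e (Or.inl rfl)).symm.trans hx
    · exact (hflat _ hx hxa e (Or.inr rfl)).trans hx
  exact hma ▸ hm v

theorem le_of_weightedLap_nonneg (hconn : MGConnected hd tl) (ht : ∀ e, 0 < t e)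
    {f : V → ℝ} {a : V} (hf : ∀ v ≠ a, 0 ≤ weightedLap hd tl t f v) (v : V) : f a ≤ f v := by
  simpa using le_of_weightedLap_nonpos hconn ht (f := -f)
    (fun v hv => by simpa [weightedLap_neg] using hf v hv) v

theorem abs_sub_le_of_weightedLap_eq_inc (hconn : MGConnected hd tl)
    (hloop : ∀ e, hd e ≠ tl e) (ht : ∀ e, 0 < t e) {f : V → ℝ} {e : E}
    (hf : ∀ v, weightedLap hd tl t f v = inc hd tl v e) (v w : V) : |f v - f w| ≤ t e := by
  have hmax := le_of_weightedLap_nonpos hconn ht (f := f) (a := hd e)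
    fun v hv => hf v ▸ inc_nonpos (Ne.symm hv)
  have hmin := le_of_weightedLap_nonneg hconn ht (f := f) (a := tl e)
    fun v hv => hf v ▸ inc_nonneg (Ne.symm hv)
  set Δ : E → ℝ := fun e' => f (hd e') - f (tl e')
  have henergy : Δ e * (Δ e / t e) ≤ Δ e :=
    calc Δ e * (Δ e / t e)
        ≤ ∑ e', Δ e' * (Δ e' / t e') :=
          Finset.single_le_sum (f := fun e' => Δ e' * (Δ e' / t e'))
            (fun e' _ => by
              simpa only [← mul_div_assoc] using div_nonneg (mul_self_nonneg _) (ht e').le)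
            (Finset.mem_univ e)
      _ = ∑ v, f v * inc hd tl v e := by
          simp only [Δ, ← sum_mul_weightedLap hloop, hf]
      _ = Δ e := (Finset.sum_congr rfl fun v _ => mul_comm _ _).trans (sum_inc_mul (hloop e) f)
  have hΔ : Δ e ≤ t e := by
    rw [← mul_div_assoc, div_le_iff₀ (ht e)] at henergy
    nlinarith [ht e, hmax (tl e)]
  exact abs_sub_le_iff.2 ⟨by linarith [hmax v, hmin w], by linarith [hmax w, hmin v]⟩

end Network

lemma Fin.eq_of_sum_eq_of_forall_castSucc {n : ℕ} {M : Type*} [AddCancelCommMonoid M]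
    {g h : Fin (n + 1) → M} (hsum : ∑ v, g v = ∑ v, h v)
    (hcast : ∀ i : Fin n, g i.castSucc = h i.castSucc) : g = h := by
  have hlast : g (Fin.last n) = h (Fin.last n) := by
    simpa [Fin.sum_univ_castSucc, hcast] using hsum
  funext v
  induction v using Fin.lastCases with
  | last => exact hlast
  | cast i => exact hcast i

section Reduced

variable {V : ℕ} {E : Type*} {hd tl : E → Fin (V + 1)}

variable (hd tl) in
def reducedIncidence : Matrix E (Fin V) ℝ :=
  Matrix.of fun e i => inc hd tl i.castSucc e

lemma reducedIncidence_mulVec (hloop : ∀ e, hd e ≠ tl e) (x : Fin V → ℝ) (e : E) :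
    (reducedIncidence hd tl *ᵥ x) e =
      (Fin.snoc x 0 : Fin (V + 1) → ℝ) (hd e) - (Fin.snoc x 0 : Fin (V + 1) → ℝ) (tl e) := by
  rw [← sum_inc_mul (hloop e), Fin.sum_univ_castSucc]
  simp [reducedIncidence, mulVec, dotProduct, Fin.snoc_castSucc]

lemma reducedIncidence_mulVec_injective (hconn : MGConnected hd tl)
    (hloop : ∀ e, hd e ≠ tl e) : Function.Injective (reducedIncidence hd tl).mulVec := by
  rw [← Matrix.coe_mulVecLin, ← LinearMap.ker_eq_bot, Matrix.ker_mulVecLin_eq_bot_iff]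
  intro x hx
  have hconst := hconn.eq_of_forall_edge (f := (Fin.snoc x 0 : Fin (V + 1) → ℝ)) fun e => by
    rw [← sub_eq_zero, ← reducedIncidence_mulVec hloop, hx, Pi.zero_apply]
  funext i
  simpa [Fin.snoc_castSucc] using hconst i.castSucc (Fin.last V)

variable [Fintype E]

variable (hd tl) in
noncomputable def reducedLaplacian (t : E → ℝ) : Matrix (Fin V) (Fin V) ℝ :=
  (reducedIncidence hd tl)ᵀ * diagonal (fun e => 1 / t e) * reducedIncidence hd tl

variable (hd tl) in
lemma of_eq_reducedLaplacian (t : E → ℝ) :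
    (Matrix.of fun i j : Fin V =>
      ∑ e : E, inc hd tl i.castSucc e * (1 / t e) * inc hd tl j.castSucc e) =
      reducedLaplacian hd tl t := by
  ext i j
  rw [reducedLaplacian, Matrix.mul_apply]
  simp [reducedIncidence, Matrix.mul_diagonal]

lemma posDef_reducedLaplacian {t : E → ℝ} (hconn : MGConnected hd tl)
    (hloop : ∀ e, hd e ≠ tl e) (ht : ∀ e, 0 < t e) : (reducedLaplacian hd tl t).PosDef := by
  have := (PosDef.diagonal fun e => one_div_pos.2 (ht e)).conjTranspose_mul_mul_same
    (reducedIncidence_mulVec_injective hconn hloop)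
  rwa [conjTranspose_eq_transpose_of_trivial] at this

lemma reducedLaplacian_mulVec (t : E → ℝ) (hloop : ∀ e, hd e ≠ tl e) (y : Fin V → ℝ)
    (i : Fin V) :
    (reducedLaplacian hd tl t *ᵥ y) i = weightedLap hd tl t (Fin.snoc y 0) i.castSucc := by
  simp only [reducedLaplacian, ← mulVec_mulVec, weightedLap, ← reducedIncidence_mulVec hloop]
  change ∑ e, inc hd tl i.castSucc e * _ = _
  refine Finset.sum_congr rfl fun e _ => ?_
  rw [mulVec_diagonal]
  ring

lemma weightedLap_snoc_eq_inc {t : E → ℝ} (hloop : ∀ e, hd e ≠ tl e) {y : Fin V → ℝ} {e : E}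
    (hy : reducedLaplacian hd tl t *ᵥ y = fun i => inc hd tl i.castSucc e) (v : Fin (V + 1)) :
    weightedLap hd tl t (Fin.snoc y 0) v = inc hd tl v e := by
  -- both sides sum to zero over all vertices, so agreeing off the base vertex suffices
  refine congrFun (Fin.eq_of_sum_eq_of_forall_castSucc (h := fun v => inc hd tl v e) ?_
    fun i => ?_) v
  · rw [sum_weightedLap hloop, sum_inc (hloop e)]
  · rw [← reducedLaplacian_mulVec t hloop, hy]

end Reduced

/-- Uniform bound for the combination of entries of the inverse reduced weighted
Laplacian: for a finite connected directed graph without self-loops on `Fin (V+1)`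
(base vertex `Fin.last V`), for all positive edge weights `t`, every edge `e` and every
`1 ≤ j ≤ V−1`, `|∑_{i=1}^{V−1} ρ_{v(i),e} (M_Γ(t)⁻¹)_{i,j} / t_e| ≤ 2`. -/
theorem stmt_9 (V : ℕ) {E : Type*} [Fintype E]
    (hd tl : E → Fin (V + 1))
    (hconn : MGConnected hd tl)
    (hloop : ∀ e, hd e ≠ tl e)
    (t : E → ℝ) (ht : ∀ e, 0 < t e)
    (e : E) (j : Fin V) :
    |(∑ i : Fin V, inc hd tl i.castSucc e *
        (Matrix.of fun i' j' : Fin V =>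
          ∑ e' : E, inc hd tl i'.castSucc e' * (1 / t e') * inc hd tl j'.castSucc e')⁻¹ i j)
      / t e| ≤ 2 := by
  rw [of_eq_reducedLaplacian hd tl t]
  set M := reducedLaplacian hd tl t
  have hM : M.PosDef := posDef_reducedLaplacian hconn hloop ht
  set y := M⁻¹ *ᵥ fun i => inc hd tl i.castSucc e
  have hy : M *ᵥ y = fun i => inc hd tl i.castSucc e := by
    rw [mulVec_mulVec, mul_nonsing_inv _ ((isUnit_iff_isUnit_det M).mp hM.isUnit), one_mulVec]
  have hsum : ∑ i, inc hd tl i.castSucc e * M⁻¹ i j = y j :=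
    Finset.sum_congr rfl fun i _ => by rw [mul_comm, ← hM.inv.isHermitian.apply i j, star_trivial]
  have hyj := abs_sub_le_of_weightedLap_eq_inc hconn hloop ht
    (weightedLap_snoc_eq_inc hloop hy) j.castSucc (Fin.last V)
  rw [Fin.snoc_castSucc, Fin.snoc_last, sub_zero] at hyj
  rw [hsum, abs_div, abs_of_pos (ht e), div_le_iff₀ (ht e)]
  linarith [ht e]
end

section
/- For non-negative integers n₀, n₁, …, n_k, the integral A(n₀; n₁,…,n_k) = ∫_{[0,1]^k} ∏_{i=1}^k du_i · (∏_{i=1}^k u_i^{n_i+1}) / (1 + ∑_{i=1}^k u_i)^{∑_{j=0}^k (n_j+2)} is a well-defined finite positive real number, and moreover it is a rational number. -/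
/-!
Integrate the variables out one at a time. Call a function of `u ∈ [0,1]^k` admissible if it
is a `ℚ`-linear combination of terms `∏ uᵢ ^ pᵢ * (c + ∑ uᵢ) ^ z` with `c` a positive integer
and either `z ≥ 0` or `z + ∑ pᵢ + k + 2 ≤ 0`. Integrating the first variable out of such a term
means computing `∫₀¹ x ^ p * (t + x) ^ z dx` with `t = c + ∑_{i ≥ 1} uᵢ`; repeated integration
by parts turns it into a `ℚ`-combination of `t ^ w` and `(t + 1) ^ w` with
`z + 1 ≤ w ≤ z + p + 1`. The degree condition keeps the exponent `-1` (and hence logarithms) out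
of this computation, and it is inherited by the result, which is admissible in one variable
fewer. With no variables left, an admissible function is a rational constant. The integrand is
the admissible term with `c = 1`, `pᵢ = nᵢ + 1` and `z = -∑ⱼ (nⱼ + 2)`.
-/

open MeasureTheory Finset

noncomputable def shiftedPowers (a b : ℤ) : Submodule ℚ (ℝ → ℝ) :=
  Submodule.span ℚ {f | ∃ (d : ℕ) (w : ℤ), w ∈ Set.Icc a b ∧ f = fun t : ℝ => (t + d) ^ w}

lemma shiftedPow_mem_shiftedPowers {a b w : ℤ} (d : ℕ) (hw : w ∈ Set.Icc a b) :
    (fun t : ℝ => (t + d) ^ w) ∈ shiftedPowers a b :=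
  Submodule.subset_span ⟨d, w, hw, rfl⟩

lemma shiftedPowers_mono {a a' b b' : ℤ} (ha : a' ≤ a) (hb : b ≤ b') :
    shiftedPowers a b ≤ shiftedPowers a' b' :=
  Submodule.span_mono fun _ ⟨d, w, hw, hf⟩ =>
    ⟨d, w, ⟨ha.trans hw.1, hw.2.trans hb⟩, hf⟩

lemma integral_add_zpow {t : ℝ} (ht : 0 < t) {z : ℤ} (hz : z ≠ -1) :
    ∫ x in (0:ℝ)..1, (t + x) ^ z = ((t + 1) ^ (z + 1) - t ^ (z + 1)) / (z + 1) := by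
  rw [intervalIntegral.integral_comp_add_left (fun x => x ^ z), add_zero,
    integral_zpow (Or.inr ⟨hz, ?_⟩)]
  rw [Set.uIcc_of_le (by linarith)]
  exact fun h => by linarith [h.1]

lemma integral_pow_succ_mul_add_zpow {t : ℝ} (ht : 0 < t) (p : ℕ) {z : ℤ} (hz : z ≠ -1) :
    ∫ x in (0:ℝ)..1, x ^ (p + 1) * (t + x) ^ z =
      (t + 1) ^ (z + 1) / (z + 1) -
        (p + 1) / (z + 1) * ∫ x in (0:ℝ)..1, x ^ p * (t + x) ^ (z + 1) := by
  have hz' : ((z:ℝ) + 1) ≠ 0 := by exact_mod_cast (by omega : z + 1 ≠ 0)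
  have hpos : ∀ x ∈ Set.uIcc (0:ℝ) 1, t + x ≠ 0 := by
    intro x hx
    rw [Set.uIcc_of_le zero_le_one] at hx
    linarith [hx.1]
  have hv : ∀ x ∈ Set.uIcc (0:ℝ) 1,
      HasDerivAt (fun x => (t + x) ^ (z + 1) / (z + 1)) ((t + x) ^ z) x := by
    intro x hx
    refine (((hasDerivAt_zpow (z + 1) (t + x) (Or.inl (hpos x hx))).comp x
      ((hasDerivAt_id x).const_add t)).div_const ((z:ℝ) + 1)).congr_deriv ?_
    rw [add_sub_cancel_right]
    push_cast
    field_simp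
  rw [intervalIntegral.integral_mul_deriv_eq_deriv_mul (fun x _ => hasDerivAt_pow (p + 1) x) hv]
  · rw [← intervalIntegral.integral_const_mul]
    simp only [one_pow, one_mul, zero_pow (Nat.succ_ne_zero p), zero_mul, sub_zero,
      add_tsub_cancel_right, Nat.cast_succ]
    congr 2 with x
    ring
  · exact (continuous_const.mul (continuous_pow p)).intervalIntegrable _ _
  · exact (ContinuousOn.zpow₀ (by fun_prop) z fun x hx => Or.inl (hpos x hx)).intervalIntegrable

theorem exists_mem_shiftedPowers_integral_pow_mul_zpow (p : ℕ) {z : ℤ}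
    (hz : 0 ≤ z ∨ z + p + 2 ≤ 0) :
    ∃ g ∈ shiftedPowers (z + 1) (z + p + 1),
      ∀ t > 0, ∫ x in (0:ℝ)..1, x ^ p * (t + x) ^ z = g t := by
  induction p generalizing z with
  | zero =>
    refine ⟨(1 / (z + 1) : ℚ) • ((fun t : ℝ => (t + (1 : ℕ)) ^ (z + 1)) -
      fun t : ℝ => (t + (0 : ℕ)) ^ (z + 1)), ?_, fun t ht => ?_⟩
    · have hw : z + 1 ∈ Set.Icc (z + 1) (z + (0 : ℕ) + 1) := by simp
      exact Submodule.smul_mem _ _ (Submodule.sub_mem _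
        (shiftedPow_mem_shiftedPowers 1 hw) (shiftedPow_mem_shiftedPowers 0 hw))
    · simp only [pow_zero, one_mul, integral_add_zpow ht (by omega : z ≠ -1)]
      simp [Rat.smul_def, div_eq_inv_mul]
  | succ p ih =>
    obtain ⟨g, hg, hgI⟩ := ih (z := z + 1) (by omega)
    refine ⟨(1 / (z + 1) : ℚ) • (fun t : ℝ => (t + (1 : ℕ)) ^ (z + 1)) -
      ((p + 1) / (z + 1) : ℚ) • g, ?_, fun t ht => ?_⟩
    · refine Submodule.sub_mem _ (Submodule.smul_mem _ _
        (shiftedPow_mem_shiftedPowers 1 ⟨le_rfl, by omega⟩))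
        (Submodule.smul_mem _ _ (shiftedPowers_mono (by omega) (by omega) hg))
    · rw [integral_pow_succ_mul_add_zpow ht p (by omega), hgI t ht]
      simp [Rat.smul_def, div_eq_inv_mul]

abbrev unitCube (k : ℕ) : Set (Fin k → ℝ) := Set.univ.pi fun _ => Set.Icc (0 : ℝ) 1

lemma pi_restrict_Icc (k : ℕ) :
    Measure.pi (fun _ : Fin k => volume.restrict (Set.Icc (0:ℝ) 1)) =
      volume.restrict (unitCube k) := by
  refine Measure.pi_eq fun s hs => ?_
  rw [Measure.restrict_apply (MeasurableSet.univ_pi hs), ← Set.pi_inter_distrib, volume_pi_pi]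
  exact Finset.prod_congr rfl fun i _ => (Measure.restrict_apply (hs i)).symm

theorem integral_unitCube_succ {k : ℕ} {f : (Fin (k + 1) → ℝ) → ℝ}
    (hf : IntegrableOn f (unitCube (k + 1))) :
    ∫ u in unitCube (k + 1), f u = ∫ y in unitCube k, ∫ x in (0:ℝ)..1, f (Fin.cons x y) := by
  set μ : Measure ℝ := volume.restrict (Set.Icc (0:ℝ) 1)
  set e := MeasurableEquiv.piFinSuccAbove (fun _ : Fin (k+1) => ℝ) 0
  have he : ∀ x y, e.symm (x, y) = Fin.cons x y := fun x y => by
    simp [e, MeasurableEquiv.piFinSuccAbove_symm_apply, Fin.insertNthEquiv]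
  have hmp := (measurePreserving_piFinSuccAbove (fun _ : Fin (k+1) => μ) 0).symm e
  rw [IntegrableOn, ← pi_restrict_Icc] at hf
  rw [← pi_restrict_Icc, ← pi_restrict_Icc, ← hmp.integral_comp e.symm.measurableEmbedding]
  refine (integral_prod_symm (f ∘ e.symm)
    ((hmp.integrable_comp_emb e.symm.measurableEmbedding).mpr hf)).trans ?_
  simp only [Function.comp_apply, he, μ, intervalIntegral.integral_of_le zero_le_one,
    integral_Icc_eq_integral_Ioc]

noncomputable def ratIntegralSubmodule {α : Type*} [MeasurableSpace α] (μ : Measure α)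
    (s : Set α) : Submodule ℚ (α → ℝ) where
  carrier := {f | IntegrableOn f s μ ∧ ∃ q : ℚ, ∫ x in s, f x ∂μ = q}
  add_mem' := by
    rintro f g ⟨hf, q, hq⟩ ⟨hg, r, hr⟩
    exact ⟨hf.add hg, q + r, by rw [Pi.add_def, integral_add hf hg, hq, hr, Rat.cast_add]⟩
  zero_mem' := ⟨integrableOn_zero, 0, by simp⟩
  smul_mem' := by
    rintro a f ⟨hf, q, hq⟩
    refine ⟨?_, a * q, ?_⟩
    · simpa only [IntegrableOn, Pi.smul_def, Rat.smul_def] using hf.const_mul (a : ℝ)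
    · simp only [Pi.smul_apply, Rat.smul_def, integral_const_mul, hq, Rat.cast_mul]

noncomputable def shiftedMonomial {k : ℕ} (p : Fin k → ℕ) (c : ℕ) (z : ℤ) (u : Fin k → ℝ) :
    ℝ :=
  (∏ i, u i ^ p i) * (c + ∑ i, u i) ^ z

noncomputable def admissibleSpan (k : ℕ) : Submodule ℚ ((Fin k → ℝ) → ℝ) :=
  Submodule.span ℚ {f | ∃ (p : Fin k → ℕ) (c : ℕ) (z : ℤ), 0 < c ∧
    (0 ≤ z ∨ z + ∑ i, (p i : ℤ) + k + 2 ≤ 0) ∧ f = shiftedMonomial p c z}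

lemma sum_nonneg_of_mem_unitCube {k : ℕ} {u : Fin k → ℝ} (hu : u ∈ unitCube k) :
    0 ≤ ∑ i, u i :=
  Finset.sum_nonneg fun i _ => (hu i trivial).1

lemma continuousOn_shiftedMonomial {k : ℕ} (p : Fin k → ℕ) {c : ℕ} (hc : 0 < c) (z : ℤ) :
    ContinuousOn (shiftedMonomial p c z) (unitCube k) := by
  refine Continuous.continuousOn (by fun_prop) |>.mul
    (ContinuousOn.zpow₀ (by fun_prop) z fun u hu => Or.inl ?_)
  have : (1 : ℝ) ≤ c := by exact_mod_cast hc
  linarith [sum_nonneg_of_mem_unitCube hu]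

lemma shiftedMonomial_cons {k : ℕ} (p : Fin (k + 1) → ℕ) (c : ℕ) (z : ℤ) (x : ℝ)
    (y : Fin k → ℝ) :
    shiftedMonomial p c z (Fin.cons x y) =
      (∏ i, y i ^ p i.succ) * (x ^ p 0 * ((c + ∑ i, y i) + x) ^ z) := by
  simp only [shiftedMonomial, Fin.prod_univ_succ, Fin.sum_cons, Fin.cons_zero, Fin.cons_succ]
  ring_nf

theorem exists_mem_admissibleSpan_eqOn_integral_cons {k : ℕ} {p : Fin (k + 1) → ℕ} {c : ℕ}
    (hc : 0 < c) {z : ℤ} (hz : 0 ≤ z ∨ z + ∑ i, (p i : ℤ) + (k + 1 : ℕ) + 2 ≤ 0) :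
    ∃ h ∈ admissibleSpan k, Set.EqOn
      (fun y => ∫ x in (0:ℝ)..1, shiftedMonomial p c z (Fin.cons x y)) h (unitCube k) := by
  set p' : Fin k → ℕ := fun i => p i.succ
  have hsum : ∑ i, (p i : ℤ) = p 0 + ∑ i, (p' i : ℤ) := Fin.sum_univ_succ _
  have hp' : 0 ≤ ∑ i, (p' i : ℤ) := Finset.sum_nonneg fun i _ => by positivity
  push_cast at hz
  obtain ⟨g, hg, hgI⟩ :=
    exists_mem_shiftedPowers_integral_pow_mul_zpow (p 0) (z := z) (by omega)
  let Φ : (ℝ → ℝ) →ₗ[ℚ] ((Fin k → ℝ) → ℝ) :=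
    LinearMap.mulLeft ℚ (fun y => ∏ i, y i ^ p' i) ∘ₗ
      LinearMap.funLeft ℚ ℝ (fun y => c + ∑ i, y i)
  refine ⟨Φ g, ?_, fun y hy => ?_⟩
  · have : (shiftedPowers (z + 1) (z + p 0 + 1)).map Φ ≤ admissibleSpan k := by
      rw [shiftedPowers, Submodule.map_span_le]
      rintro _ ⟨d, w, ⟨hw₁, hw₂⟩, rfl⟩
      refine Submodule.subset_span ⟨p', c + d, w, by omega, by omega, ?_⟩
      ext y
      simp [Φ, shiftedMonomial, LinearMap.funLeft, add_right_comm]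
    exact this (Submodule.mem_map_of_mem hg)
  · have hc' : (0 : ℝ) < c := by exact_mod_cast hc
    simp only [shiftedMonomial_cons, intervalIntegral.integral_const_mul]
    rw [hgI _ (by linarith [sum_nonneg_of_mem_unitCube hy])]
    rfl

lemma integrableOn_shiftedMonomial {k : ℕ} (p : Fin k → ℕ) {c : ℕ} (hc : 0 < c) (z : ℤ) :
    IntegrableOn (shiftedMonomial p c z) (unitCube k) :=
  (continuousOn_shiftedMonomial p hc z).integrableOn_compact
    (isCompact_univ_pi fun _ => isCompact_Icc)

theorem admissibleSpan_le_ratIntegralSubmodule (k : ℕ) :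
    admissibleSpan k ≤ ratIntegralSubmodule volume (unitCube k) := by
  induction k with
  | zero =>
    rw [admissibleSpan, Submodule.span_le]
    rintro _ ⟨p, c, z, hc, -, rfl⟩
    refine ⟨integrableOn_shiftedMonomial p hc z, (c : ℚ) ^ z, ?_⟩
    simp [shiftedMonomial, measureReal_def, Real.volume_Icc_pi]
  | succ k ih =>
    rw [admissibleSpan, Submodule.span_le]
    rintro _ ⟨p, c, z, hc, hz, rfl⟩
    obtain ⟨h, hh, hEq⟩ := exists_mem_admissibleSpan_eqOn_integral_cons hc hz
    obtain ⟨-, q, hq⟩ := ih hh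
    refine ⟨integrableOn_shiftedMonomial p hc z, q, ?_⟩
    rw [integral_unitCube_succ (integrableOn_shiftedMonomial p hc z),
      setIntegral_congr_fun (MeasurableSet.univ_pi fun _ => measurableSet_Icc) hEq, hq]

theorem setIntegral_shiftedMonomial_pos {k : ℕ} (p : Fin k → ℕ) {c : ℕ} (hc : 0 < c)
    (z : ℤ) :
    0 < ∫ u in unitCube k, shiftedMonomial p c z u := by
  have hc' : (0 : ℝ) < c := by exact_mod_cast hc
  have hpos : ∀ u : Fin k → ℝ, (∀ i, 0 < u i) → 0 < shiftedMonomial p c z u := fun u hu =>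
    mul_pos (prod_pos fun i _ => pow_pos (hu i) _)
      (zpow_pos (by linarith [Finset.sum_nonneg fun i (_ : i ∈ univ) => (hu i).le]) _)
  have hnonneg : ∀ u ∈ unitCube k, 0 ≤ shiftedMonomial p c z u := fun u hu =>
    mul_nonneg (prod_nonneg fun i _ => pow_nonneg (hu i trivial).1 _)
      (zpow_nonneg (by linarith [sum_nonneg_of_mem_unitCube hu]) _)
  rw [setIntegral_pos_iff_support_of_nonneg_ae
    (ae_restrict_of_forall_mem (MeasurableSet.univ_pi fun _ => measurableSet_Icc) hnonneg)
    (integrableOn_shiftedMonomial p hc z)]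
  calc (0 : ENNReal) < volume (Set.univ.pi fun _ : Fin k => Set.Ioc (0:ℝ) 1) := by
        simp [volume_pi_pi]
    _ ≤ volume (Function.support (shiftedMonomial p c z) ∩ unitCube k) :=
        measure_mono fun u hu => ⟨(hpos u fun i => (hu i trivial).1).ne',
          fun i _ => Set.Ioc_subset_Icc_self (hu i trivial)⟩

/-- For non-negative integers `n₀, n₁, …, n_k`, the integral
`A(n₀;n₁,…,n_k) = ∫_{[0,1]^k} (∏ u_i^{n_i+1}) / (1 + ∑ u_i)^{∑_{j=0}^k (n_j+2)} ∏ du_i`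
is well-defined (the integrand is integrable), finite and positive, and is a rational number. -/
theorem stmt_10 (k : ℕ) (n₀ : ℕ) (n : Fin k → ℕ) :
    IntegrableOn
      (fun u : Fin k → ℝ =>
        (∏ i : Fin k, u i ^ (n i + 1)) /
          (1 + ∑ i : Fin k, u i) ^ ((n₀ + 2) + ∑ j : Fin k, (n j + 2)))
      (Set.univ.pi fun _ => Set.Icc (0 : ℝ) 1)
    ∧ 0 < (∫ u : Fin k → ℝ in Set.univ.pi (fun _ => Set.Icc (0 : ℝ) 1),
        (∏ i : Fin k, u i ^ (n i + 1)) /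
          (1 + ∑ i : Fin k, u i) ^ ((n₀ + 2) + ∑ j : Fin k, (n j + 2)))
    ∧ ∃ q : ℚ, (∫ u : Fin k → ℝ in Set.univ.pi (fun _ => Set.Icc (0 : ℝ) 1),
        (∏ i : Fin k, u i ^ (n i + 1)) /
          (1 + ∑ i : Fin k, u i) ^ ((n₀ + 2) + ∑ j : Fin k, (n j + 2))) = q := by
  set N := (n₀ + 2) + ∑ j : Fin k, (n j + 2)
  have hf : (fun u : Fin k → ℝ =>
      (∏ i : Fin k, u i ^ (n i + 1)) / (1 + ∑ i : Fin k, u i) ^ N) =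
        shiftedMonomial (fun i => n i + 1) 1 (-N) := by
    ext u
    simp [shiftedMonomial, div_eq_mul_inv]
  have hadm : shiftedMonomial (fun i => n i + 1) 1 (-N) ∈ admissibleSpan k := by
    refine Submodule.subset_span ⟨_, 1, -N, one_pos, Or.inr ?_, rfl⟩
    simp only [N, sum_add_distrib, sum_const, card_univ, Fintype.card_fin, smul_eq_mul,
      Nat.cast_add, Nat.cast_sum, Nat.cast_mul, Nat.cast_one, Nat.cast_ofNat, Int.nsmul_eq_mul,
      mul_one]
    omega
  obtain ⟨hint, q, hq⟩ := admissibleSpan_le_ratIntegralSubmodule k hadm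
  rw [hf]
  exact ⟨hint, setIntegral_shiftedMonomial_pos _ one_pos _, q, hq⟩
end

section
/- For fixed L > 0 and b ∈ ℝ, one has ∑_{n∈ℤ} (1/√(4πL̃)) (b−n)²/L̃ · e^{-(b−n)²/(4L̃)} = 2 ∑_{m∈ℤ} (1 − 8L̃π²m²) e^{-4π²m²L̃ + 2πimb} for L̃ > 0, and hence lim_{L̃→∞} ∑_{n∈ℤ} (1/√(4πL̃)) (b−n)²/L̃ · e^{-(b−n)²/(4L̃)} = 2. -/
open Real Filter Complex
open MeasureTheory FourierTransform Topology Asymptotics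

/-!
The summand is `f (b - n)` for `f x = x² g x / (L √(4πL))`, where `g x = e^{-x²/(4L)}` is a
Gaussian. Multiplication by `x²` becomes `-(4π²)⁻¹ d²/dξ²` under the Fourier transform, so
differentiating the transform of `g` twice gives `𝓕 f ξ = 2 (1 - 8Lπ²ξ²) e^{-4π²Lξ²}`, and Poisson
summation yields the identity. Writing `y = 4π²m²L`, the `m`-th dual term has norm
`|1 - 2y| e^{-y} ≤ 4 / (1 + y)`; this tends to `0` for `m ≠ 0` and is dominated by `4 / (1 + m²)`
once `L ≥ 1`, so by dominated convergence the dual series tends to its term `m = 0`, which is `1`.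
-/

lemma integrable_pow_smul_cexp_neg_mul_sq {b : ℂ} (hb : 0 < b.re) (n : ℕ) :
    Integrable fun x : ℝ => x ^ n • cexp (-b * x ^ 2) := by
  have h := integrable_rpow_mul_exp_neg_mul_sq hb (s := n) (by linarith [n.cast_nonneg (α := ℝ)])
  simp_rw [rpow_natCast] at h
  refine h.norm.mono' (by fun_prop) (Eventually.of_forall fun x => ?_)
  rw [norm_smul, norm_cexp_neg_mul_sq, norm_mul, norm_of_nonneg (exp_pos _).le]

lemma Real.fourier_const_mul (c : ℂ) (f : ℝ → ℂ) :
    𝓕 (fun x => c * f x) = fun w => c * 𝓕 f w := by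
  ext w
  simp only [Real.fourier_eq, ← integral_const_mul, mul_smul_comm]

lemma hasDerivAt_cexp_neg_mul_sq (β : ℂ) (t : ℝ) :
    HasDerivAt (fun t : ℝ => cexp (-β * t ^ 2)) (-2 * β * t * cexp (-β * t ^ 2)) t := by
  convert (((hasDerivAt_pow 2 (t : ℂ)).const_mul (-β)).cexp).comp_ofReal using 1
  ring

lemma deriv_cexp_neg_mul_sq (β : ℂ) :
    deriv (fun t : ℝ => cexp (-β * t ^ 2)) = fun t : ℝ => -2 * β * t * cexp (-β * t ^ 2) :=
  funext fun t => (hasDerivAt_cexp_neg_mul_sq β t).deriv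

lemma iteratedDeriv_two_cexp_neg_mul_sq (β : ℂ) :
    iteratedDeriv 2 (fun t : ℝ => cexp (-β * t ^ 2)) =
      fun t : ℝ => (4 * β ^ 2 * t ^ 2 - 2 * β) * cexp (-β * t ^ 2) := by
  rw [iteratedDeriv_succ, iteratedDeriv_one, deriv_cexp_neg_mul_sq]
  ext t
  have h : HasDerivAt (fun t : ℝ => -2 * β * t * cexp (-β * t ^ 2))
      (-2 * β * 1 * cexp (-β * t ^ 2) + -2 * β * t * (-2 * β * t * cexp (-β * t ^ 2))) t := by
    simpa using ((hasDerivAt_id t).ofReal_comp.const_mul (-2 * β)).fun_mul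
      (hasDerivAt_cexp_neg_mul_sq β t)
  rw [h.deriv]
  ring

theorem fourier_sq_mul_gaussian_pi {a : ℂ} (ha : 0 < a.re) :
    𝓕 (fun x : ℝ => (x : ℂ) ^ 2 * cexp (-π * a * x ^ 2)) = fun t : ℝ =>
      1 / a ^ (1 / 2 : ℂ) * ((1 - 2 * π / a * t ^ 2) / (2 * π * a)) * cexp (-π / a * t ^ 2) := by
  have hb : 0 < ((π : ℂ) * a).re := by rw [re_ofReal_mul]; exact mul_pos pi_pos ha
  have hint (n : ℕ) (_ : (n : ℕ∞) ≤ 2) :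
      Integrable fun x : ℝ => x ^ n • cexp (-π * a * x ^ 2) := by
    simpa only [neg_mul] using integrable_pow_smul_cexp_neg_mul_sq hb n
  have h := Real.iteratedDeriv_fourier hint le_rfl (n := 2)
  rw [fourier_gaussian_pi ha] at h
  ext t
  have ht := congrFun h t
  have hlhs : iteratedDeriv 2 (fun t : ℝ => 1 / a ^ (1 / 2 : ℂ) * cexp (-π / a * t ^ 2)) t =
      1 / a ^ (1 / 2 : ℂ) * ((4 * (π / a) ^ 2 * t ^ 2 - 2 * (π / a)) * cexp (-π / a * t ^ 2)) := by
    rw [iteratedDeriv_const_mul_field]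
    simp only [neg_div, iteratedDeriv_two_cexp_neg_mul_sq]
  have hrhs : (fun x : ℝ => (-2 * π * I * x) ^ 2 • cexp (-π * a * x ^ 2)) =
      fun x : ℝ => -4 * π ^ 2 * ((x : ℂ) ^ 2 * cexp (-π * a * x ^ 2)) := by
    ext x
    rw [smul_eq_mul, mul_pow, mul_pow, I_sq]
    ring
  rw [hlhs, hrhs, Real.fourier_const_mul] at ht
  have hπ : (π : ℂ) ≠ 0 := ofReal_ne_zero.mpr pi_ne_zero
  have ha0 : a ≠ 0 := by rintro rfl; simp at ha
  field_simp at ht ⊢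
  linear_combination (1 / 2 : ℂ) * ht

lemma isLittleO_sq_mul_exp_neg_mul_sq_cocompact {b : ℂ} (hb : 0 < b.re) (s : ℝ) :
    (fun x : ℝ => (x : ℂ) ^ 2 * cexp (-b * x ^ 2)) =o[cocompact ℝ] (|·| ^ s) := by
  have hsq : (fun x : ℝ => (x : ℂ) ^ 2) =O[cocompact ℝ] (|·| ^ (2 : ℝ)) :=
    isBigO_of_le _ fun x => by simp
  refine (hsq.mul_isLittleO (isLittleO_exp_neg_mul_sq_cocompact hb (s - 2))).congr' .rfl ?_
  filter_upwards [(isCompact_singleton (x := (0 : ℝ))).compl_mem_cocompact] with x hx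
  rw [← rpow_add (abs_pos.mpr hx)]
  ring_nf

noncomputable def sqHeatKernel (L x : ℝ) : ℝ :=
  1 / √(4 * π * L) * (x ^ 2 / L) * rexp (-x ^ 2 / (4 * L))

section SqHeatKernel

variable {L : ℝ}

lemma ofReal_sqHeatKernel (x : ℝ) :
    (sqHeatKernel L x : ℂ) =
      (1 / (√(4 * π * L) * L) : ℝ) * ((x : ℂ) ^ 2 * cexp (-π * ((4 * π * L)⁻¹ : ℝ) * x ^ 2)) := by
  simp only [sqHeatKernel, ofReal_mul, ofReal_div, ofReal_exp, ofReal_pow, ofReal_neg, ofReal_inv]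
  field_simp

lemma continuous_sqHeatKernel : Continuous fun x => (sqHeatKernel L x : ℂ) := by
  unfold sqHeatKernel
  fun_prop

lemma fourier_sqHeatKernel (hL : 0 < L) :
    𝓕 (fun x => (sqHeatKernel L x : ℂ)) = fun ξ : ℝ =>
      2 * ((1 - 8 * L * π ^ 2 * ξ ^ 2 : ℝ) : ℂ) * cexp (-(4 * π ^ 2 * (ξ : ℂ) ^ 2 * L)) := by
  have ha : 0 < (((4 * π * L)⁻¹ : ℝ) : ℂ).re := by rw [ofReal_re]; positivity
  simp_rw [ofReal_sqHeatKernel]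
  rw [Real.fourier_const_mul, fourier_sq_mul_gaussian_pi ha]
  have hsqrt : (((4 * π * L)⁻¹ : ℝ) : ℂ) ^ (1 / 2 : ℂ) = ((√(4 * π * L))⁻¹ : ℝ) := by
    rw [← sqrt_inv, sqrt_eq_rpow, ofReal_cpow (by positivity)]
    norm_num
  have hπ : (π : ℂ) ≠ 0 := ofReal_ne_zero.mpr pi_ne_zero
  have hL' : (L : ℂ) ≠ 0 := ofReal_ne_zero.mpr hL.ne'
  have hs : (√(4 * π * L) : ℂ) ≠ 0 := ofReal_ne_zero.mpr (by positivity)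
  ext ξ
  rw [hsqrt]
  push_cast
  field_simp
  ring

lemma isBigO_sqHeatKernel (hL : 0 < L) :
    (fun x => (sqHeatKernel L x : ℂ)) =O[cocompact ℝ] (|·| ^ (-2 : ℝ)) := by
  have ha : 0 < ((π : ℂ) * ((4 * π * L)⁻¹ : ℝ)).re := by
    rw [← ofReal_mul, ofReal_re]; positivity
  refine (((isLittleO_sq_mul_exp_neg_mul_sq_cocompact ha _).const_mul_left
    ((1 / (√(4 * π * L) * L) : ℝ) : ℂ)).isBigO).congr_left fun x => ?_
  simp only [ofReal_sqHeatKernel, neg_mul]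

lemma isBigO_fourier_sqHeatKernel (hL : 0 < L) :
    𝓕 (fun x => (sqHeatKernel L x : ℂ)) =O[cocompact ℝ] (|·| ^ (-2 : ℝ)) := by
  have hc : 0 < ((4 * π ^ 2 * L : ℝ) : ℂ).re := by rw [ofReal_re]; positivity
  have h : 𝓕 (fun x => (sqHeatKernel L x : ℂ)) = fun ξ : ℝ =>
      2 * cexp (-((4 * π ^ 2 * L : ℝ) : ℂ) * ξ ^ 2) -
        ((16 * L * π ^ 2 : ℝ) : ℂ) * ((ξ : ℂ) ^ 2 * cexp (-((4 * π ^ 2 * L : ℝ) : ℂ) * ξ ^ 2)) := by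
    rw [fourier_sqHeatKernel hL]
    ext ξ
    push_cast
    ring_nf
  rw [h]
  exact (((isLittleO_exp_neg_mul_sq_cocompact hc _).const_mul_left _).sub
    ((isLittleO_sq_mul_exp_neg_mul_sq_cocompact hc _).const_mul_left _)).isBigO

end SqHeatKernel

noncomputable def poissonDualTerm (b L : ℝ) (m : ℤ) : ℂ :=
  ((1 - 8 * L * π ^ 2 * (m : ℝ) ^ 2 : ℝ) : ℂ) *
    cexp (-(4 * π ^ 2 * (m : ℂ) ^ 2 * L) + 2 * π * I * m * b)

theorem tsum_sqHeatKernel_eq (b : ℝ) {L : ℝ} (hL : 0 < L) :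
    ((∑' n : ℤ, sqHeatKernel L (b - n) : ℝ) : ℂ) = 2 * ∑' m : ℤ, poissonDualTerm b L m := by
  have poisson := Real.tsum_eq_tsum_fourier_of_rpow_decay continuous_sqHeatKernel one_lt_two
    (isBigO_sqHeatKernel hL) (isBigO_fourier_sqHeatKernel hL) b
  rw [ofReal_tsum, ← (Equiv.neg ℤ).tsum_eq]
  simp only [Equiv.neg_apply, Int.cast_neg, sub_neg_eq_add]
  rw [poisson, ← tsum_mul_left]
  refine tsum_congr fun m => ?_
  rw [fourier_sqHeatKernel hL, fourier_coe_apply, poissonDualTerm, Complex.exp_add]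
  push_cast
  ring_nf

lemma abs_one_sub_two_mul_mul_exp_neg_le {y : ℝ} (hy : 0 ≤ y) :
    |1 - 2 * y| * rexp (-y) ≤ 4 / (1 + y) := by
  have hexp := quadratic_le_exp_of_nonneg hy
  rw [Real.exp_neg, ← div_eq_mul_inv, div_le_div_iff₀ (exp_pos y) (by positivity)]
  have habs : |1 - 2 * y| ≤ 1 + 2 * y := abs_le.mpr ⟨by linarith, by linarith⟩
  nlinarith

lemma norm_poissonDualTerm (b L : ℝ) (m : ℤ) :
    ‖poissonDualTerm b L m‖ =
      |1 - 2 * (4 * π ^ 2 * m ^ 2 * L)| * rexp (-(4 * π ^ 2 * m ^ 2 * L)) := by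
  have harg : -(4 * π ^ 2 * (m : ℂ) ^ 2 * L) + 2 * π * I * m * b =
      ((-(4 * π ^ 2 * m ^ 2 * L) : ℝ) : ℂ) + ((2 * π * m * b : ℝ) : ℂ) * I := by
    push_cast
    ring
  rw [poissonDualTerm, harg, Complex.exp_add, norm_mul, norm_mul, norm_real, Real.norm_eq_abs,
    norm_exp_ofReal, norm_exp_ofReal_mul_I, mul_one]
  ring_nf

lemma norm_poissonDualTerm_le (b : ℝ) {L : ℝ} (hL : 0 ≤ L) (m : ℤ) :
    ‖poissonDualTerm b L m‖ ≤ 4 / (1 + 4 * π ^ 2 * m ^ 2 * L) :=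
  norm_poissonDualTerm b L m ▸ abs_one_sub_two_mul_mul_exp_neg_le (by positivity)

lemma tendsto_poissonDualTerm (b : ℝ) {m : ℤ} (hm : m ≠ 0) :
    Tendsto (fun L => poissonDualTerm b L m) atTop (𝓝 0) := by
  have hc : 0 < 4 * π ^ 2 * (m : ℝ) ^ 2 := by positivity
  have hbound : Tendsto (fun L : ℝ => 4 / (1 + 4 * π ^ 2 * m ^ 2 * L)) atTop (𝓝 0) :=
    tendsto_const_nhds.div_atTop (tendsto_atTop_add_const_left _ 1 (tendsto_id.const_mul_atTop hc))
  refine squeeze_zero_norm' ?_ hbound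
  filter_upwards [eventually_ge_atTop 0] with L hL
  exact norm_poissonDualTerm_le b hL m

lemma summable_one_div_one_add_int_sq : Summable fun m : ℤ => 1 / (1 + (m : ℝ) ^ 2) := by
  refine (summable_one_div_int_pow.mpr one_lt_two).of_norm_bounded_eventually ?_
  filter_upwards [(Set.finite_singleton (0 : ℤ)).compl_mem_cofinite] with m hm
  have hm' : (0 : ℝ) < (m : ℝ) ^ 2 := by
    have : (m : ℝ) ≠ 0 := by simpa using hm
    positivity
  rw [Real.norm_of_nonneg (by positivity)]
  gcongr
  linarith

lemma tendsto_tsum_poissonDualTerm (b : ℝ) :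
    Tendsto (fun L => ∑' m : ℤ, poissonDualTerm b L m) atTop (𝓝 1) := by
  have hlim (m : ℤ) :
      Tendsto (fun L => poissonDualTerm b L m) atTop (𝓝 (if m = 0 then 1 else 0)) := by
    split_ifs with hm
    · simp [hm, poissonDualTerm]
    · exact tendsto_poissonDualTerm b hm
  have h := tendsto_tsum_of_dominated_convergence
    (summable_one_div_one_add_int_sq.mul_left 4) hlim ?_
  · rwa [tsum_ite_eq] at h
  filter_upwards [eventually_ge_atTop 1] with L hL m
  refine (norm_poissonDualTerm_le b (by linarith) m).trans ?_
  have hπL : 1 ≤ 4 * π ^ 2 * L := by nlinarith [pi_gt_three]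
  rw [mul_one_div]
  gcongr
  nlinarith [sq_nonneg (m : ℝ)]

/-- For `b ∈ ℝ`: for every `L̃ > 0` the Poisson-summation identity
`∑_{n∈ℤ} (1/√(4πL̃)) (b−n)²/L̃ · e^{-(b−n)²/(4L̃)}
  = 2 ∑_{m∈ℤ} (1 − 8L̃π²m²) e^{-4π²m²L̃ + 2πimb}`
holds, and hence the left-hand side tends to `2` as `L̃ → ∞`. -/
theorem stmt_18 (b : ℝ) :
    (∀ L : ℝ, 0 < L →
      ((∑' n : ℤ, (1 / Real.sqrt (4 * π * L)) * ((b - n) ^ 2 / L) *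
          Real.exp (-(b - n) ^ 2 / (4 * L)) : ℝ) : ℂ)
        = 2 * ∑' m : ℤ, ((1 - 8 * L * π ^ 2 * (m : ℝ) ^ 2 : ℝ) : ℂ) *
            Complex.exp (-(4 * π ^ 2 * (m : ℂ) ^ 2 * L) + 2 * π * Complex.I * m * b))
    ∧ Tendsto (fun L : ℝ =>
        ∑' n : ℤ, (1 / Real.sqrt (4 * π * L)) * ((b - n) ^ 2 / L) *
          Real.exp (-(b - n) ^ 2 / (4 * L)))
        atTop (nhds 2) := by
  refine ⟨fun L hL => tsum_sqHeatKernel_eq b hL, ?_⟩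
  rw [← tendsto_ofReal_iff, ofReal_ofNat]
  have h := (tendsto_tsum_poissonDualTerm b).const_mul 2
  rw [mul_one] at h
  refine h.congr' ?_
  filter_upwards [eventually_gt_atTop 0] with L hL
  exact (tsum_sqHeatKernel_eq b hL).symm
end

section
/- Let f : ℍ → ℂ be a smooth function on the upper half-plane of the form f(τ, τ̄) = ∑_{i=0}^N f_i(τ) (Im τ)^{-i} with each f_i holomorphic, and suppose f is modular of weight k for SL(2,ℤ), i.e. f(γτ, overline{γτ}) = (Cτ+D)^k f(τ,τ̄) for all γ = (A B; C D) ∈ SL(2,ℤ). If additionally f is bounded as Im τ → ∞ (uniformly in Re τ), then the holomorphic part f₀(τ) satisfies f₀((aτ+b)/(cτ+d)) = (cτ+d)^k f₀(τ) + (lower-order corrections polynomial in c/(cτ+d)); in particular f₀ is a quasimodular form of weight k. -/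
/-!
Replace `(Im τ)⁻¹` by a free variable `u`. For each `γ = (a b; c d)` the modularity relation
becomes `D(τ, u) = 0`, where `D` is holomorphic in `τ ∈ ℍ` and polynomial in `u`, but the
relation is only known on the real surface `u = (Im τ)⁻¹`. For fixed `u = 1/t`, `D(·, u)`
vanishes on the horizontal line `Im τ = t`, hence on all of `ℍ`; for fixed `τ`, the polynomial
`D(τ, ·)` then vanishes on `(0, ∞)`, hence everywhere. Since
`1/Im(γτ) = (cτ+d)²/Im τ - 2ic(cτ+d)`, the value `u = 2ic/(cτ+d)` kills every `f_i(γτ)` with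
`i ≥ 1` and leaves `f₀(γτ) = (cτ+d)^k ∑ f_r(τ) (2ic/(cτ+d))^r`.
-/

open Finset Complex Filter Topology Set

theorem AnalyticOnNhd.eqOn_zero_of_eventually_eq_zero_on_real_line {E : Type*}
    [NormedAddCommGroup E] [NormedSpace ℂ E] {F : ℂ → E} {U : Set ℂ}
    (hF : AnalyticOnNhd ℂ F U) (hU : IsPreconnected U) {z₀ : ℂ} (hz₀ : z₀ ∈ U)
    (h : ∀ᶠ x : ℝ in 𝓝 0, F (z₀ + x) = 0) : EqOn F 0 U := by
  refine hF.eqOn_zero_of_preconnected_of_frequently_eq_zero hU hz₀ ?_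
  have hline : Tendsto (fun x : ℝ => z₀ + x) (𝓝[≠] 0) (𝓝[≠] z₀) := by
    refine tendsto_nhdsWithin_of_tendsto_nhds_of_eventually_within _ ?_ ?_
    · exact ((continuous_const.add continuous_ofReal).tendsto' 0 z₀ (by simp)).mono_left
        nhdsWithin_le_nhds
    · exact eventually_nhdsWithin_of_forall fun x hx => by simpa using hx
  exact hline.frequently (h.filter_mono nhdsWithin_le_nhds).frequently

theorem eq_zero_of_eq_zero_at_inv_im {E : Type*} [NormedAddCommGroup E] [NormedSpace ℂ E]
    [CompleteSpace E] {D : ℂ → ℂ → E}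
    (hhol : ∀ u, DifferentiableOn ℂ (fun z => D z u) {z | 0 < z.im})
    (hent : ∀ z, 0 < z.im → Differentiable ℂ (D z))
    (h : ∀ z, 0 < z.im → D z (z.im : ℂ)⁻¹ = 0) {z : ℂ} (hz : 0 < z.im) (u : ℂ) :
    D z u = 0 := by
  have hH : IsOpen {z : ℂ | 0 < z.im} := isOpen_lt continuous_const continuous_im
  have hinv : ∀ t : ℝ, 0 < t → D z (t : ℂ)⁻¹ = 0 := by
    intro t ht
    refine ((hhol (t : ℂ)⁻¹).analyticOnNhd hH).eqOn_zero_of_eventually_eq_zero_on_real_line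
      (convex_halfSpace_im_gt 0).isPreconnected (z₀ := t * I) (by simpa using ht)
      (Eventually.of_forall fun x => ?_) hz
    simpa using h (t * I + x) (by simpa using ht)
  have hentire : AnalyticOnNhd ℂ (D z) univ := fun w _ => (hent z hz).analyticAt w
  refine hentire.eqOn_zero_of_eventually_eq_zero_on_real_line isPreconnected_univ (z₀ := 1)
    (mem_univ _) ?_ (mem_univ u)
  filter_upwards [lt_mem_nhds (show (-1 : ℝ) < 0 by norm_num)] with x hx
  simpa using hinv (1 + x)⁻¹ (inv_pos.mpr (by linarith))

noncomputable def moebius (a b c d : ℤ) (z : ℂ) : ℂ := (a * z + b) / (c * z + d)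

section Moebius

variable {a b c d : ℤ} {z : ℂ}

theorem moebius_denom_ne_zero (hdet : a * d - b * c = 1) (hz : 0 < z.im) : (c : ℂ) * z + d ≠ 0 := by
  intro h
  have hc : (c : ℝ) * z.im = 0 := by simpa using congrArg im h
  obtain rfl : c = 0 := by exact_mod_cast (mul_eq_zero.mp hc).resolve_right hz.ne'
  obtain rfl : d = 0 := by simpa using h
  simp at hdet

theorem im_moebius (hdet : a * d - b * c = 1) (z : ℂ) :
    (moebius a b c d z).im = z.im / normSq (c * z + d) := by
  have h : (a : ℝ) * d - b * c = 1 := by exact_mod_cast hdet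
  rw [moebius, div_im, div_eq_mul_inv, div_eq_mul_inv]
  simp only [add_im, add_re, mul_im, mul_re, intCast_re, intCast_im]
  linear_combination (z.im * (normSq (c * z + d))⁻¹) * h

theorem im_moebius_pos (hdet : a * d - b * c = 1) (hz : 0 < z.im) :
    0 < (moebius a b c d z).im := by
  rw [im_moebius hdet]
  exact div_pos hz (normSq_pos.mpr (moebius_denom_ne_zero hdet hz))

theorem inv_im_moebius (hdet : a * d - b * c = 1) (hz : 0 < z.im) :
    ((moebius a b c d z).im : ℂ)⁻¹
      = (c * z + d) ^ 2 * (z.im : ℂ)⁻¹ - 2 * I * c * (c * z + d) := by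
  have him : (z.im : ℂ) ≠ 0 := ofReal_ne_zero.mpr hz.ne'
  have hconj : (starRingEnd ℂ) ((c : ℂ) * z + d) = c * z + d - 2 * I * c * z.im := by
    apply Complex.ext <;> simp; ring
  rw [im_moebius hdet, ofReal_div, ← mul_conj, hconj]
  field_simp

end Moebius

def invImPolynomial (N : ℕ) (f : ℕ → ℂ → ℂ) (z u : ℂ) : ℂ :=
  ∑ i ∈ range (N + 1), f i z * u ^ i

theorem invImPolynomial_zero (N : ℕ) (f : ℕ → ℂ → ℂ) (z : ℂ) :
    invImPolynomial N f z 0 = f 0 z := by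
  simp [invImPolynomial, sum_range_succ']

/-- `(cz+d)² u - 2ic(cz+d)` is `(Im γz)⁻¹` at `u = (Im z)⁻¹`, by `inv_im_moebius`. -/
noncomputable def modularDefect (N k : ℕ) (f : ℕ → ℂ → ℂ) (a b c d : ℤ) (z u : ℂ) : ℂ :=
  invImPolynomial N f (moebius a b c d z) ((c * z + d) ^ 2 * u - 2 * I * c * (c * z + d))
    - (c * z + d) ^ k * invImPolynomial N f z u

section Defect

variable {N k : ℕ} {f : ℕ → ℂ → ℂ} {a b c d : ℤ}

theorem modularDefect_inv_im_eq_zero (hdet : a * d - b * c = 1)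
    (hmod : ∀ z : ℂ, 0 < z.im →
      invImPolynomial N f (moebius a b c d z) ((moebius a b c d z).im : ℂ)⁻¹
        = ((c : ℂ) * z + d) ^ k * invImPolynomial N f z (z.im : ℂ)⁻¹)
    {z : ℂ} (hz : 0 < z.im) :
    modularDefect N k f a b c d z (z.im : ℂ)⁻¹ = 0 := by
  rw [modularDefect, ← inv_im_moebius hdet hz, hmod z hz, sub_self]

theorem differentiableOn_modularDefect (hdet : a * d - b * c = 1)
    (hhol : ∀ i ≤ N, DifferentiableOn ℂ (f i) {z : ℂ | 0 < z.im}) (u : ℂ) :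
    DifferentiableOn ℂ (fun z => modularDefect N k f a b c d z u) {z : ℂ | 0 < z.im} := by
  have hγ : DifferentiableOn ℂ (moebius a b c d) {z : ℂ | 0 < z.im} :=
    DifferentiableOn.div (by fun_prop) (by fun_prop) fun z hz => moebius_denom_ne_zero hdet hz
  have hfγ : ∀ i ≤ N, DifferentiableOn ℂ (fun z => f i (moebius a b c d z)) {z | 0 < z.im} :=
    fun i hi => (hhol i hi).comp hγ fun z hz => im_moebius_pos hdet hz
  unfold modularDefect invImPolynomial
  refine .sub (.fun_sum fun i hi => .mul (hfγ i ?_) (by fun_prop))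
    (.mul (by fun_prop) (.fun_sum fun i hi => .mul (hhol i ?_) (by fun_prop))) <;>
  exact Nat.lt_succ_iff.mp (mem_range.mp hi)

theorem differentiable_modularDefect (z : ℂ) :
    Differentiable ℂ (modularDefect N k f a b c d z) := by
  unfold modularDefect invImPolynomial
  fun_prop

theorem modularDefect_eq_zero (hdet : a * d - b * c = 1)
    (hhol : ∀ i ≤ N, DifferentiableOn ℂ (f i) {z : ℂ | 0 < z.im})
    (hmod : ∀ z : ℂ, 0 < z.im →
      invImPolynomial N f (moebius a b c d z) ((moebius a b c d z).im : ℂ)⁻¹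
        = ((c : ℂ) * z + d) ^ k * invImPolynomial N f z (z.im : ℂ)⁻¹)
    {z : ℂ} (hz : 0 < z.im) (u : ℂ) :
    modularDefect N k f a b c d z u = 0 :=
  eq_zero_of_eq_zero_at_inv_im (differentiableOn_modularDefect hdet hhol)
    (fun z _ => differentiable_modularDefect z)
    (fun _ hz => modularDefect_inv_im_eq_zero hdet hmod hz) hz u

end Defect

theorem stmt_19_general (k N : ℕ) (f : ℕ → ℂ → ℂ)
    (hhol : ∀ i, i ≤ N → DifferentiableOn ℂ (f i) {z : ℂ | 0 < z.im})
    (hmod : ∀ a b c d : ℤ, a * d - b * c = 1 → ∀ τ : ℂ, 0 < τ.im →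
      (∑ i ∈ Finset.range (N + 1),
          f i (((a : ℂ) * τ + b) / ((c : ℂ) * τ + d)) *
            (((((a : ℂ) * τ + b) / ((c : ℂ) * τ + d)).im : ℂ))⁻¹ ^ i)
        = ((c : ℂ) * τ + d) ^ k *
            ∑ i ∈ Finset.range (N + 1), f i τ * ((τ.im : ℂ))⁻¹ ^ i) :
    ∃ (M : ℕ) (g : ℕ → ℂ → ℂ),
      (∀ r, DifferentiableOn ℂ (g r) {z : ℂ | 0 < z.im})
      ∧ g 0 = f 0
      ∧ ∀ a b c d : ℤ, a * d - b * c = 1 → ∀ τ : ℂ, 0 < τ.im →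
          f 0 (((a : ℂ) * τ + b) / ((c : ℂ) * τ + d))
            = ((c : ℂ) * τ + d) ^ k *
                ∑ r ∈ Finset.range (M + 1),
                  g r τ * ((c : ℂ) / ((c : ℂ) * τ + d)) ^ r := by
  refine ⟨N, fun r τ => if r ≤ N then (2 * I) ^ r * f r τ else 0, fun r => ?_, by simp, ?_⟩
  · dsimp only
    split_ifs with hr
    exacts [(hhol r hr).const_mul _, differentiableOn_const 0]
  intro a b c d hdet τ hτ
  have key := modularDefect_eq_zero hdet hhol (hmod a b c d hdet) hτ (2 * I * c / (c * τ + d))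
  rw [modularDefect, sub_eq_zero, show ((c : ℂ) * τ + d) ^ 2 * (2 * I * c / (c * τ + d))
    - 2 * I * c * (c * τ + d) = 0 by field_simp; ring, invImPolynomial_zero, moebius] at key
  rw [key, invImPolynomial]
  congr 1
  refine sum_congr rfl fun i hi => ?_
  dsimp only
  rw [if_pos (Nat.lt_succ_iff.mp (mem_range.mp hi))]
  ring

/-- Let `f(τ,τ̄) = ∑_{i=0}^N f_i(τ) (Im τ)^{-i}` with each `f_i` holomorphic on the upper
half-plane, suppose `f` is modular of weight `k` for `SL(2,ℤ)` and bounded as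
`Im τ → ∞` uniformly in `Re τ`.  Then the holomorphic part `f₀` is quasimodular of
weight `k`: there exist finitely many holomorphic functions `g_r` on the upper
half-plane with `g₀ = f₀` and
`f₀(γτ) = (cτ+d)^k ∑_r g_r(τ) (c/(cτ+d))^r` for all `γ = (a b; c d) ∈ SL(2,ℤ)`. -/
theorem stmt_19 (k N : ℕ) (f : ℕ → ℂ → ℂ)
    (hhol : ∀ i, i ≤ N → DifferentiableOn ℂ (f i) {z : ℂ | 0 < z.im})
    (hmod : ∀ a b c d : ℤ, a * d - b * c = 1 → ∀ τ : ℂ, 0 < τ.im →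
      (∑ i ∈ Finset.range (N + 1),
          f i (((a : ℂ) * τ + b) / ((c : ℂ) * τ + d)) *
            (((((a : ℂ) * τ + b) / ((c : ℂ) * τ + d)).im : ℂ))⁻¹ ^ i)
        = ((c : ℂ) * τ + d) ^ k *
            ∑ i ∈ Finset.range (N + 1), f i τ * ((τ.im : ℂ))⁻¹ ^ i)
    (hbd : ∃ Cb T : ℝ, ∀ τ : ℂ, T ≤ τ.im →
      ‖∑ i ∈ Finset.range (N + 1), f i τ * ((τ.im : ℂ))⁻¹ ^ i‖ ≤ Cb) :
    ∃ (M : ℕ) (g : ℕ → ℂ → ℂ),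
      (∀ r, DifferentiableOn ℂ (g r) {z : ℂ | 0 < z.im})
      ∧ g 0 = f 0
      ∧ ∀ a b c d : ℤ, a * d - b * c = 1 → ∀ τ : ℂ, 0 < τ.im →
          f 0 (((a : ℂ) * τ + b) / ((c : ℂ) * τ + d))
            = ((c : ℂ) * τ + d) ^ k *
                ∑ r ∈ Finset.range (M + 1),
                  g r τ * ((c : ℂ) / ((c : ℂ) * τ + d)) ^ r :=
  stmt_19_general k N f hhol hmod
end
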